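/- Let G be a connected graph, f a harmonic eigenvector for λ₁, u and v vertices with f(u) ≤ f(z) ≤ f(v) for all z, and S the edge set of a shortest u–v path. Then λ₁ ≥ (f(v) − f(u))²/(|S| · Σ_x f(x)²d(x)), assuming f is normalized so that the Rayleigh quotient of f equals λ₁. -/

import Mathlib

/-!
Write the path as darts `x₀ x₁ … x_L` from `u` to `v`. Then `f v - f u` telescopes into
`∑ (f xᵢ₊₁ - f xᵢ)`, so Cauchy–Schwarz gives `(f v - f u)² ≤ L · ∑ (f xᵢ₊₁ - f xᵢ)²`. A path
traverses each edge at most once, so the last sum is bounded by the Dirichlet energy of `f`,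
which is `λ₁ · ∑ f(x)² d(x)` by the normalization of `f`.
-/

open Finset
open scoped Classical

noncomputable section

variable {V : Type*}

/-- Dirichlet energy `∑_{u~v} (f u - f v)^2` (each edge counted once). -/
def SimpleGraph.energyForm [Fintype V] (G : SimpleGraph V) (f : V → ℝ) : ℝ :=
  (1/2) * ∑ x : V, ∑ y : V, if G.Adj x y then (f x - f y)^2 else 0

/-- The weighted norm `∑_x f(x)^2 d(x)`. -/
def SimpleGraph.qForm [Fintype V] (G : SimpleGraph V) (f : V → ℝ) : ℝ :=
  ∑ x : V, (f x)^2 * (G.degree x : ℝ)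

/-- The spectral gap of the normalized Laplacian, via the variational characterization
`λ₁ = inf { R(f) : ∑ f(u) d(u) = 0, f ≢ 0 }`. -/
def SimpleGraph.lambda1 [Fintype V] (G : SimpleGraph V) : ℝ :=
  sInf { r | ∃ f : V → ℝ, (∑ x : V, f x * (G.degree x : ℝ)) = 0 ∧ G.qForm f ≠ 0 ∧
    r = G.energyForm f / G.qForm f }

def sqDiff (f : V → ℝ) : Sym2 V → ℝ :=
  Sym2.lift ⟨fun x y ↦ (f x - f y) ^ 2, fun x y ↦ by ring⟩

lemma sqDiff_nonneg (f : V → ℝ) (e : Sym2 V) : 0 ≤ sqDiff f e := by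
  induction e using Sym2.ind with
  | _ x y => exact sq_nonneg _

lemma List.sq_sum_le_length_mul_sum_sq (l : List ℝ) :
    l.sum ^ 2 ≤ l.length * (l.map (· ^ 2)).sum := by
  have h := sq_sum_le_card_mul_sum_sq (s := Finset.univ) (f := fun i : Fin l.length ↦ l[(i : ℕ)])
  rwa [Finset.card_univ, Fintype.card_fin, Fin.sum_univ_getElem,
    Fin.sum_univ_fun_getElem l (· ^ 2)] at h

namespace SimpleGraph

variable [Fintype V] (G : SimpleGraph V)

lemma sum_adj_eq_sum_darts {M : Type*} [AddCommMonoid M] (g : V → V → M) :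
    ∑ x, ∑ y, (if G.Adj x y then g x y else 0) = ∑ d : G.Dart, g d.fst d.snd := by
  rw [← Finset.sum_product', ← Finset.sum_filter]
  refine Finset.sum_bij' (fun xy h ↦ ⟨xy, (mem_filter.1 h).2⟩) (fun d _ ↦ (d.fst, d.snd))
    ?_ ?_ ?_ ?_ ?_ <;> simp

lemma sum_darts_edge {M : Type*} [AddCommMonoid M] (g : Sym2 V → M) :
    ∑ d : G.Dart, g d.edge = 2 • ∑ e ∈ G.edgeFinset, g e := by
  rw [← Finset.sum_fiberwise_of_maps_to (g := Dart.edge) (t := G.edgeFinset)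
    (fun d _ ↦ G.mem_edgeFinset.2 d.edge_mem), Finset.smul_sum]
  refine Finset.sum_congr rfl fun e he ↦ ?_
  rw [Finset.sum_congr rfl fun d hd ↦ by rw [(Finset.mem_filter.1 hd).2], Finset.sum_const,
    G.dart_edge_fiber_card e (G.mem_edgeFinset.1 he)]

lemma energyForm_eq_sum_edgeFinset (f : V → ℝ) :
    G.energyForm f = ∑ e ∈ G.edgeFinset, sqDiff f e := by
  have h := G.sum_darts_edge (sqDiff f)
  rw [energyForm, G.sum_adj_eq_sum_darts (fun x y ↦ (f x - f y) ^ 2)]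
  simp only [Dart.edge, sqDiff, Sym2.lift_mk] at h ⊢
  rw [h, nsmul_eq_mul]
  ring

lemma energyForm_nonneg (f : V → ℝ) : 0 ≤ G.energyForm f := by
  rw [energyForm_eq_sum_edgeFinset]
  exact Finset.sum_nonneg fun e _ ↦ sqDiff_nonneg f e

lemma qForm_nonneg (f : V → ℝ) : 0 ≤ G.qForm f :=
  Finset.sum_nonneg fun _ _ ↦ mul_nonneg (sq_nonneg _) (Nat.cast_nonneg _)

end SimpleGraph

namespace SimpleGraph.Walk

variable {G : SimpleGraph V}

lemma sum_darts_sub {M : Type*} [AddCommGroup M] (g : V → M) {u v : V} (p : G.Walk u v) :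
    (p.darts.map fun d ↦ g d.fst - g d.snd).sum = g u - g v := by
  induction p with
  | nil => simp
  | cons h q ih => simp [ih]

lemma sq_sub_le_length_mul_sum_edges (f : V → ℝ) {u v : V} (p : G.Walk u v) :
    (f u - f v) ^ 2 ≤ p.length * (p.edges.map (sqDiff f)).sum := by
  have h := (p.darts.map fun d ↦ f d.fst - f d.snd).sq_sum_le_length_mul_sum_sq
  rw [p.sum_darts_sub f, List.length_map, length_darts, List.map_map] at h
  rwa [edges, List.map_map]

lemma IsTrail.sum_edges_le_sum_edgeFinset [Fintype V] {g : Sym2 V → ℝ} (hg : ∀ e, 0 ≤ g e)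
    {u v : V} {p : G.Walk u v} (hp : p.IsTrail) :
    (p.edges.map g).sum ≤ ∑ e ∈ G.edgeFinset, g e := by
  rw [← List.sum_toFinset _ hp.edges_nodup]
  refine Finset.sum_le_sum_of_subset_of_nonneg (fun e he ↦ ?_) fun e _ _ ↦ hg e
  exact G.mem_edgeFinset.2 (p.edges_subset_edgeSet (List.mem_toFinset.1 he))

lemma IsTrail.sq_sub_le_length_mul_energyForm [Fintype V] (f : V → ℝ) {u v : V}
    {p : G.Walk u v} (hp : p.IsTrail) :
    (f u - f v) ^ 2 ≤ p.length * G.energyForm f := by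
  rw [G.energyForm_eq_sum_edgeFinset]
  exact (p.sq_sub_le_length_mul_sum_edges f).trans <| mul_le_mul_of_nonneg_left
    (hp.sum_edges_le_sum_edgeFinset (sqDiff_nonneg f)) (Nat.cast_nonneg _)

end SimpleGraph.Walk

theorem lambda1_ge_path_bound_general [Fintype V] (G : SimpleGraph V)
    (f : V → ℝ) (hray : G.energyForm f / G.qForm f = G.lambda1)
    (u v : V) (p : G.Walk u v) (hp : p.IsPath) :
    G.lambda1 ≥ (f v - f u)^2 / ((p.length : ℝ) * G.qForm f) := by
  have hpath : (f v - f u) ^ 2 ≤ p.length * G.energyForm f := by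
    rw [← neg_sub, neg_sq]
    exact hp.isTrail.sq_sub_le_length_mul_energyForm f
  rw [ge_iff_le, ← hray, ← div_div]
  refine div_le_div_of_nonneg_right ?_ (G.qForm_nonneg f)
  exact div_le_of_le_mul₀ (Nat.cast_nonneg _) (G.energyForm_nonneg f) (by rwa [mul_comm])

/-- Restricting the Dirichlet energy to a shortest `u`–`v` path and applying Cauchy–Schwarz:
`λ₁ ≥ (f v - f u)² / (|S| · ∑ f(x)² d(x))`. -/
theorem lambda1_ge_path_bound [Fintype V] (G : SimpleGraph V) (hG : G.Connected)
    (f : V → ℝ) (hf0 : (∑ x : V, f x * (G.degree x : ℝ)) = 0) (hq : G.qForm f ≠ 0)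
    (hray : G.energyForm f / G.qForm f = G.lambda1)
    (u v : V) (hu : ∀ z, f u ≤ f z) (hv : ∀ z, f z ≤ f v)
    (p : G.Walk u v) (hp : p.IsPath) (hlen : p.length = G.dist u v) :
    G.lambda1 ≥ (f v - f u)^2 / ((p.length : ℝ) * G.qForm f) :=
  lambda1_ge_path_bound_general G f hray u v p hp
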